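/- arXiv:2103.12590 — 2 statements merged into one kernel-verified Lean document; each statement's English description precedes it below -/
import Mathlib

section
/- For 0 < x < 1, ∫_0^x log^2(1-t)/t dt = log(x) log^2(1-x) + 2 log(1-x) Li_2(1-x) - 2 Li_3(1-x) + 2 ζ(3). -/
/-!
Without the constant `2 ζ(3)`, the right-hand side is a primitive of `log² (1 - t) / t` on
`(0, 1)`: differentiate with `Li_{m+1}' (y) = Li_m (y) / y` and `Li_1 (y) = -log (1 - y)`.
It extends continuously to `t = 0`, because `t log t → 0` and `log² (1 - t) / t → 0` there,
and its value at `0` is `-2 Li_3 (1) = -2 ζ(3)`; the fundamental theorem of calculus concludes.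
-/

open Real Filter Finset

noncomputable def Li (m : ℕ) (x : ℝ) : ℝ := ∑' n : ℕ, x ^ (n + 1) / (n + 1 : ℝ) ^ m

noncomputable def H (p n : ℕ) : ℝ := ∑ j ∈ Finset.Icc 1 n, 1 / (j : ℝ) ^ p

noncomputable def Hbar (p n : ℕ) : ℝ := ∑ j ∈ Finset.Icc 1 n, (-1 : ℝ) ^ (j - 1) / (j : ℝ) ^ p

theorem Li_eq_mul_tsum (m : ℕ) (y : ℝ) :
    Li m y = y * ∑' n : ℕ, y ^ n / ((n : ℝ) + 1) ^ m := by
  rw [Li, ← tsum_mul_left]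
  congr 1 with n
  ring

theorem Li_one {y : ℝ} (hy : |y| < 1) : Li 1 y = -log (1 - y) := by
  simpa [Li] using (hasSum_pow_div_log_of_abs_lt_one hy).tsum_eq

theorem hasDerivAt_Li_succ (m : ℕ) {y : ℝ} (hy : |y| < 1) (hy0 : y ≠ 0) :
    HasDerivAt (Li (m + 1)) (Li m y / y) y := by
  set r : ℝ := (1 + |y|) / 2 with hr
  have hr1 : r < 1 := by linarith
  have hyr : y ∈ Set.Ioo (-r) r := abs_lt.1 (by linarith)
  have hderiv := hasDerivAt_tsum_of_isPreconnected
    (g := fun (n : ℕ) (z : ℝ) => z ^ (n + 1) / ((n : ℝ) + 1) ^ (m + 1))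
    (g' := fun (n : ℕ) (z : ℝ) => z ^ n / ((n : ℝ) + 1) ^ m) (y₀ := 0)
    (summable_geometric_of_lt_one (by positivity) hr1) isOpen_Ioo
    (convex_Ioo _ _).isPreconnected ?_ ?_ ⟨by linarith [abs_nonneg y], by positivity⟩
    (by simp [summable_zero]) hyr
  · rwa [Li_eq_mul_tsum m y, mul_div_cancel_left₀ _ hy0]
  · intro n z _
    refine ((hasDerivAt_pow (n + 1) z).div_const (((n : ℝ) + 1) ^ (m + 1))).congr_deriv ?_
    rw [Nat.add_sub_cancel, pow_succ _ m]
    push_cast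
    field_simp
  · intro n z hz
    rw [norm_div, norm_pow, norm_pow, Real.norm_eq_abs, Real.norm_of_nonneg (by positivity)]
    calc |z| ^ n / ((n : ℝ) + 1) ^ m ≤ |z| ^ n :=
          div_le_self (by positivity) (one_le_pow₀ (by linarith [n.cast_nonneg (α := ℝ)]))
      _ ≤ r ^ n := pow_le_pow_left₀ (abs_nonneg z) (abs_lt.2 hz).le n

theorem continuousOn_Li {m : ℕ} (hm : 2 ≤ m) : ContinuousOn (Li m) (Set.Icc (-1) 1) := by
  have hsum : Summable fun n : ℕ => 1 / ((n : ℝ) + 1) ^ m := by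
    simpa using (summable_nat_add_iff 1).2 (summable_one_div_nat_pow.2 hm)
  refine continuousOn_tsum (fun n => by fun_prop) hsum fun n z hz => ?_
  rw [norm_div, norm_pow, norm_pow, Real.norm_eq_abs, Real.norm_of_nonneg (by positivity)]
  gcongr
  exact pow_le_one₀ (abs_nonneg z) (abs_le.2 hz)

theorem continuousAt_sq_div_of_hasDerivAt {f : ℝ → ℝ} {f' : ℝ} (hf : HasDerivAt f f' 0)
    (hf0 : f 0 = 0) : ContinuousAt (fun t => f t ^ 2 / t) 0 := by
  rw [← continuousWithinAt_compl_self, ContinuousWithinAt, div_zero]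
  have hlim := (hasDerivAt_iff_tendsto_slope.1 hf).mul
    (hf.continuousAt.tendsto.mono_left nhdsWithin_le_nhds)
  rw [hf0, mul_zero] at hlim
  refine hlim.congr' (eventually_nhdsWithin_of_forall fun t _ => ?_)
  simp only [slope_def_field, hf0, sub_zero]
  ring

theorem continuousOn_log_one_sub_sq_div :
    ContinuousOn (fun t : ℝ => log (1 - t) ^ 2 / t) (Set.Iio 1) := by
  intro t ht
  rcases eq_or_ne t 0 with rfl | ht0
  · exact (continuousAt_sq_div_of_hasDerivAt (((hasDerivAt_id 0).const_sub 1).log (by norm_num))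
      (by simp)).continuousWithinAt
  · have h1t : 1 - t ≠ 0 := sub_ne_zero.2 (ne_of_gt ht)
    exact ((((continuousAt_const.sub continuousAt_id).log h1t).pow 2).div continuousAt_id
      ht0).continuousWithinAt

noncomputable def primitiveLogOneSubSqDiv (t : ℝ) : ℝ :=
  log t * log (1 - t) ^ 2 + 2 * log (1 - t) * Li 2 (1 - t) - 2 * Li 3 (1 - t)

theorem hasDerivAt_primitiveLogOneSubSqDiv {t : ℝ} (ht0 : 0 < t) (ht1 : t < 1) :
    HasDerivAt primitiveLogOneSubSqDiv (log (1 - t) ^ 2 / t) t := by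
  have h1t : 1 - t ≠ 0 := sub_ne_zero.2 ht1.ne'
  have habs : |1 - t| < 1 := abs_lt.2 ⟨by linarith, by linarith⟩
  have hsub : HasDerivAt (fun u : ℝ => 1 - u) (-1) t := (hasDerivAt_id t).const_sub 1
  have hlog := hsub.log h1t
  have hLi2 : HasDerivAt (fun u => Li 2 (1 - u)) _ t :=
    (hasDerivAt_Li_succ 1 habs h1t).comp t hsub
  have hLi3 : HasDerivAt (fun u => Li 3 (1 - u)) _ t :=
    (hasDerivAt_Li_succ 2 habs h1t).comp t hsub
  rw [Li_one habs, sub_sub_cancel] at hLi2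
  refine ((((hasDerivAt_log ht0.ne').mul (hlog.fun_pow 2)).add ((hlog.const_mul 2).mul hLi2)).sub
    (hLi3.const_mul 2)).congr_deriv ?_
  field_simp
  ring

-- At `t = 0` both sides vanish, as `log 0 = 0` and `a / 0 = 0`.
theorem log_mul_eq_mul_log_mul_div (t a : ℝ) : log t * a = t * log t * (a / t) := by
  rcases eq_or_ne t 0 with rfl | ht
  · simp
  · field_simp

theorem continuousOn_primitiveLogOneSubSqDiv :
    ContinuousOn primitiveLogOneSubSqDiv (Set.Ico 0 1) := by
  have hmaps : Set.MapsTo (fun t : ℝ => 1 - t) (Set.Ico 0 1) (Set.Icc (-1) 1) :=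
    fun t ht => ⟨by linarith [ht.2], by linarith [ht.1]⟩
  have hsub : ContinuousOn (fun t : ℝ => 1 - t) (Set.Ico 0 1) := by fun_prop
  have hlog : ContinuousOn (fun t : ℝ => log (1 - t)) (Set.Ico 0 1) :=
    hsub.log fun t ht => sub_ne_zero.2 (ne_of_gt ht.2)
  have hLi2 := (continuousOn_Li le_rfl).comp hsub hmaps
  have hLi3 := (continuousOn_Li (m := 3) (by norm_num)).comp hsub hmaps
  have hfirst : ContinuousOn (fun t : ℝ => log t * log (1 - t) ^ 2) (Set.Ico 0 1) := by
    simp_rw [log_mul_eq_mul_log_mul_div _ (log (1 - _) ^ 2)]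
    exact continuous_mul_log.continuousOn.mul
      (continuousOn_log_one_sub_sq_div.mono Set.Ico_subset_Iio_self)
  exact (hfirst.add ((continuousOn_const.mul hlog).mul hLi2)).sub (continuousOn_const.mul hLi3)

theorem stmt9 (x : ℝ) (hx0 : 0 < x) (hx1 : x < 1) :
    ∫ t in (0 : ℝ)..x, (Real.log (1 - t)) ^ 2 / t
      = Real.log x * (Real.log (1 - x)) ^ 2 + 2 * Real.log (1 - x) * Li 2 (1 - x)
        - 2 * Li 3 (1 - x) + 2 * Li 3 1 := by
  have hIcc : Set.Icc 0 x ⊆ Set.Ico 0 1 := Set.Icc_subset_Ico_right hx1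
  have huIcc : Set.uIcc 0 x ⊆ Set.Iio 1 := by
    rw [Set.uIcc_of_le hx0.le]
    exact fun t ht => ht.2.trans_lt hx1
  rw [intervalIntegral.integral_eq_sub_of_hasDeriv_right_of_le hx0.le
    (continuousOn_primitiveLogOneSubSqDiv.mono hIcc)
    (fun t ht => (hasDerivAt_primitiveLogOneSubSqDiv ht.1 (ht.2.trans hx1)).hasDerivWithinAt)
    (continuousOn_log_one_sub_sq_div.mono huIcc).intervalIntegrable]
  simp [primitiveLogOneSubSqDiv]
end

section
/- ∑_{n=1}^∞ (-1)^n H̄_n / n = -π^2/12 - (1/2) log^2(2). -/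
/-!
Since `Hbar 1 n - Hbar 1 (n - 1) = (-1)^(n-1) / n`, the difference of squares gives
`Hbar 1 n ^ 2 - Hbar 1 (n - 1) ^ 2 = -2 (-1)^n Hbar 1 n / n - 1 / n ^ 2`, so the partial sums
telescope to `-(Hbar 1 N ^ 2 + H 2 N) / 2`. Then `H 2 N → ζ(2) = π² / 6`, and `Hbar 1 N → log 2`:
the alternating series converges, and its even partial sums `H 1 (2k) - H 1 k` tend to `log 2`
because `H 1 n - log n → γ`.
-/

open Real Filter Finset

open scoped Topology

lemma sum_Icc_one_eq_sum_range {M : Type*} [AddCommMonoid M] (f : ℕ → M) (n : ℕ) :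
    ∑ j ∈ Icc 1 n, f j = ∑ i ∈ range n, f (i + 1) := by
  rw [← Ico_add_one_right_eq_Icc, sum_Ico_eq_sum_range, add_tsub_cancel_right]
  simp only [add_comm 1]

lemma H_eq_sum_range (p n : ℕ) : H p n = ∑ i ∈ range n, 1 / ((i : ℝ) + 1) ^ p := by
  simp [H, sum_Icc_one_eq_sum_range]

lemma Hbar_eq_sum_range (p n : ℕ) :
    Hbar p n = ∑ i ∈ range n, (-1 : ℝ) ^ i * (1 / ((i : ℝ) + 1) ^ p) := by
  simp [Hbar, sum_Icc_one_eq_sum_range, div_eq_mul_inv]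

lemma H_succ (p n : ℕ) : H p (n + 1) = H p n + 1 / ((n : ℝ) + 1) ^ p := by
  simp only [H_eq_sum_range, sum_range_succ]

lemma Hbar_succ (p n : ℕ) : Hbar p (n + 1) = Hbar p n + (-1 : ℝ) ^ n / ((n : ℝ) + 1) ^ p := by
  simp only [Hbar_eq_sum_range, sum_range_succ, mul_one_div]

lemma Hbar_two_mul (p k : ℕ) : Hbar p (2 * k) = H p (2 * k) - 2 * H p k / 2 ^ p := by
  induction k with
  | zero => simp [Hbar, H]
  | succ k ih =>
    rw [show 2 * (k + 1) = 2 * k + 1 + 1 by ring, Hbar_succ, Hbar_succ, ih, H_succ, H_succ,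
      H_succ, pow_succ, pow_mul]
    push_cast
    have : (2 * (k : ℝ) + 1 + 1) ^ p = 2 ^ p * ((k : ℝ) + 1) ^ p := by rw [← mul_pow]; ring
    rw [this]
    field_simp
    ring

lemma H_one_eq_harmonic (n : ℕ) : H 1 n = harmonic n := by
  simp [H, harmonic_eq_sum_Icc]

lemma tendsto_Hbar_one_two_mul : Tendsto (fun k => Hbar 1 (2 * k)) atTop (𝓝 (log 2)) := by
  have hγ : Tendsto (fun n : ℕ => H 1 n - log n) atTop (𝓝 eulerMascheroniConstant) := by
    simpa only [H_one_eq_harmonic] using tendsto_harmonic_sub_log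
  have hγ₂ : Tendsto (fun k : ℕ => H 1 (2 * k) - log (2 * k)) atTop
      (𝓝 eulerMascheroniConstant) := by
    simpa [Function.comp_def] using hγ.comp (strictMono_mul_left_of_pos two_pos).tendsto_atTop
  have hlim := (hγ₂.sub hγ).add_const (log 2)
  rw [sub_self, zero_add] at hlim
  refine hlim.congr' ?_
  filter_upwards [eventually_ne_atTop 0] with k hk
  rw [Hbar_two_mul, log_mul two_ne_zero (Nat.cast_ne_zero.mpr hk)]
  ring

lemma tendsto_Hbar_one : Tendsto (Hbar 1) atTop (𝓝 (log 2)) := by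
  obtain ⟨l, hl⟩ := Antitone.tendsto_alternating_series_of_tendsto_zero
    (f := fun i : ℕ => 1 / ((i : ℝ) + 1) ^ 1) (fun i j hij => by dsimp only; gcongr)
    (by simpa using tendsto_one_div_add_atTop_nhds_zero_nat (𝕜 := ℝ))
  simp only [← Hbar_eq_sum_range] at hl
  have := hl.comp (strictMono_mul_left_of_pos two_pos).tendsto_atTop
  rwa [tendsto_nhds_unique this tendsto_Hbar_one_two_mul] at hl

lemma tendsto_H_two : Tendsto (H 2) atTop (𝓝 (π ^ 2 / 6)) := by
  have := ((hasSum_nat_add_iff' 1).mpr hasSum_zeta_two).tendsto_sum_nat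
  convert this using 2 with n <;> simp [H_eq_sum_range]

lemma sum_neg_one_pow_mul_Hbar_div (N : ℕ) :
    ∑ n ∈ Icc 1 N, (-1 : ℝ) ^ n * Hbar 1 n / n = -(Hbar 1 N ^ 2 + H 2 N) / 2 := by
  induction N with
  | zero => simp [Hbar, H]
  | succ N ih =>
    rw [sum_Icc_succ_top (by omega), ih, Hbar_succ, H_succ]
    have hsq : ((-1 : ℝ) ^ N) ^ 2 = 1 := by rw [← pow_mul, mul_comm, pow_mul, neg_one_sq, one_pow]
    push_cast
    field_simp
    linear_combination -hsq

theorem stmt14 :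
    Filter.Tendsto (fun N => ∑ n ∈ Finset.Icc 1 N, (-1 : ℝ) ^ n * Hbar 1 n / (n : ℝ))
      Filter.atTop
      (nhds (-(Real.pi ^ 2) / 12 - (1 / 2) * (Real.log 2) ^ 2)) := by
  simp only [sum_neg_one_pow_mul_Hbar_div]
  convert ((tendsto_Hbar_one.pow 2).add tendsto_H_two).neg.div_const 2 using 2
  ring
end
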